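/- arXiv:1702.05315 — 9 statements merged into one kernel-verified Lean document; each statement's English description precedes it below -/
import Mathlib

section
/- Let (𝒳, 𝒜, P) be a measure space with P a probability measure, let ι be an index type, and let θ_i : 𝒳 → ℝ (i ∈ ι) be measurable functions with sup_{i∈ι} sup_{x∈𝒳} |θ_i(x)| ≤ θ̄ < ∞. Fix r ∈ [1,∞] and suppose θ̄_r := sup_{i∈ι} ‖θ_i‖_{L^r(P)} < ∞. Let w : ι → ℝ satisfy w̲ := inf_{i∈ι} w_i > 0. Suppose g₀(x) = ∑_{i∈ι} b_i θ_i(x) pointwise for coefficients b : ι → ℝ such that the family (w_i|b_i|)_{i∈ι} is summable with ∑_{i∈ι} w_i|b_i| ≤ B₀ < ∞. Then for every B > 0 there exist coefficients b' : ι → ℝ with (w_i|b'_i|)_{i∈ι} summable, ∑_{i∈ι} w_i|b'_i| ≤ B, and ‖g₀ − ∑_{i∈ι} b'_i θ_i‖_{L^r(P)} ≤ w̲^{-1} θ̄_r · max{B₀ − B, 0}. -/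
/-!
With `t = B / B₀` if `B < B₀` and `t = 1` otherwise, the coefficients `t • b` have weighted
`ℓ¹` norm at most `B`, and `g₀ - ∑ t bᵢ θᵢ = (1 - t) g₀`, where `(1 - t) B₀ ≤ max (B₀ - B) 0`.
It remains to bound `‖g₀‖_{L^r}`: since `wᵢ ≥ w̲`, `∑ |bᵢ| ≤ w̲⁻¹ B₀`, and Minkowski's
inequality for countable series gives `‖∑ bᵢ θᵢ‖_{L^r} ≤ ∑ |bᵢ| θ̄ᵣ`.
-/

open MeasureTheory
open scoped ENNReal

namespace MeasureTheory

theorem eLpNorm_tsum_le {X E ι : Type*} {_ : MeasurableSpace X} {μ : Measure X}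
    [NormedAddCommGroup E] [CompleteSpace E] [Countable ι] {p : ℝ≥0∞} (hp : 1 ≤ p)
    {f : ι → X → E} (hf : ∀ i, AEStronglyMeasurable (f i) μ) :
    eLpNorm (fun x => ∑' i, f i x) p μ ≤ ∑' i, eLpNorm (f i) p μ := by
  rcases eq_top_or_lt_top (∑' i, eLpNorm (f i) p μ) with h | h
  · simp [h]
  have hasSum : ∀ᵐ x ∂μ, HasSum (fun i => f i x) (∑' i, f i x) := by
    filter_upwards [summable_norm_of_tsum_eLpNorm_ne_top hp hf h.ne] with x hx
    exact hx.of_norm.hasSum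
  refine Lp.eLpNorm_le_of_ae_tendsto (Filter.Eventually.of_forall fun s => ?_)
    (fun s => Finset.aestronglyMeasurable_fun_sum s fun i _ => hf i) hasSum
  calc eLpNorm (fun x => ∑ i ∈ s, f i x) p μ ≤ ∑ i ∈ s, eLpNorm (f i) p μ := by
        simpa only [Finset.sum_fn] using eLpNorm_sum_le (fun i _ => hf i) hp
    _ ≤ ∑' i, eLpNorm (f i) p μ := ENNReal.sum_le_tsum s

theorem eLpNorm_tsum_mul_le {X ι : Type*} {_ : MeasurableSpace X} {μ : Measure X}
    {p : ℝ≥0∞} (hp : 1 ≤ p) {θ : ι → X → ℝ} (hθ : ∀ i, AEStronglyMeasurable (θ i) μ)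
    {C : ℝ≥0∞} (hC : ∀ i, eLpNorm (θ i) p μ ≤ C) {c : ι → ℝ} (hc : Summable c) :
    eLpNorm (fun x => ∑' i, c i * θ i x) p μ ≤ ENNReal.ofReal (∑' i, |c i|) * C := by
  -- Minkowski fails for uncountable families of null functions: pass to the support of `c`.
  set S := Function.support c
  have : Countable S := hc.countable_support.to_subtype
  have hsupp : ∀ x, ∑' i : S, c i * θ i x = ∑' i, c i * θ i x := fun x =>
    tsum_subtype_eq_of_support_subset (f := fun i => c i * θ i x)
      (Function.support_mul_subset_left _ _)
  calc eLpNorm (fun x => ∑' i, c i * θ i x) p μ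
      = eLpNorm (fun x => ∑' i : S, c i * θ i x) p μ := by simp only [hsupp]
    _ ≤ ∑' i : S, eLpNorm (c i • θ i) p μ :=
        eLpNorm_tsum_le hp fun i => (hθ i).const_smul (c i)
    _ ≤ ∑' i : S, ‖c i‖ₑ * C := by
        gcongr with i
        rw [eLpNorm_const_smul]
        gcongr
        exact hC i
    _ ≤ (∑' i, ‖c i‖ₑ) * C := by
        rw [ENNReal.tsum_mul_right]
        gcongr
        exact ENNReal.tsum_comp_le_tsum_of_injective Subtype.val_injective _
    _ = ENNReal.ofReal (∑' i, |c i|) * C := by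
        rw [ENNReal.ofReal_tsum_of_nonneg (fun i => abs_nonneg _) hc.abs]
        simp only [Real.enorm_eq_ofReal_abs]

end MeasureTheory

section WeightedCoefficients

variable {ι : Type*} {w b : ι → ℝ} {a : ℝ}

theorem abs_le_inv_mul_weight_mul_abs (ha : 0 < a) (hw : ∀ i, a ≤ w i) (i : ι) :
    |b i| ≤ a⁻¹ * (w i * |b i|) :=
  (le_inv_mul_iff₀ ha).2 (mul_le_mul_of_nonneg_right (hw i) (abs_nonneg _))

theorem summable_of_summable_weight_mul_abs (ha : 0 < a) (hw : ∀ i, a ≤ w i)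
    (h : Summable fun i => w i * |b i|) : Summable b :=
  summable_abs_iff.1 <| (h.mul_left a⁻¹).of_nonneg_of_le (fun _ => abs_nonneg _)
    (abs_le_inv_mul_weight_mul_abs ha hw)

theorem tsum_abs_le_inv_mul_tsum_weight_mul_abs (ha : 0 < a) (hw : ∀ i, a ≤ w i)
    (h : Summable fun i => w i * |b i|) :
    ∑' i, |b i| ≤ a⁻¹ * ∑' i, w i * |b i| := by
  rw [← tsum_mul_left]
  exact (summable_of_summable_weight_mul_abs ha hw h).abs.tsum_le_tsum
    (abs_le_inv_mul_weight_mul_abs ha hw) (h.mul_left a⁻¹)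

end WeightedCoefficients

theorem exists_scaling_factor {B₀ B : ℝ} (hB : 0 < B) :
    ∃ t : ℝ, 0 ≤ t ∧ t ≤ 1 ∧ t * B₀ ≤ B ∧ (1 - t) * B₀ ≤ max (B₀ - B) 0 := by
  rcases le_or_gt B₀ B with h | h
  · exact ⟨1, zero_le_one, le_rfl, by simpa using h, by simp⟩
  · have hB₀ : 0 < B₀ := hB.trans h
    refine ⟨B / B₀, by positivity, (div_le_one hB₀).2 h.le,
      (div_mul_cancel₀ B hB₀.ne').le, ?_⟩
    rw [sub_mul, div_mul_cancel₀ B hB₀.ne', one_mul]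
    exact le_max_left _ _

theorem stmt_0_general {𝒳 : Type*} [MeasurableSpace 𝒳] (P : Measure 𝒳)
    {ι : Type*} (θ : ι → 𝒳 → ℝ) (hθmeas : ∀ i, Measurable (θ i))
    (r : ℝ≥0∞) (hr : 1 ≤ r) (θbarr : ℝ≥0∞)
    (hθr : ∀ i, eLpNorm (θ i) r P ≤ θbarr)
    (w : ι → ℝ) (wlow : ℝ) (hwlow : IsGLB (Set.range w) wlow) (hwpos : 0 < wlow)
    (g₀ : 𝒳 → ℝ) (b : ι → ℝ) (hbsum : Summable (fun i => w i * |b i|))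
    (B₀ : ℝ) (hB₀ : ∑' i, w i * |b i| ≤ B₀)
    (hg₀ : ∀ x, g₀ x = ∑' i, b i * θ i x) :
    ∀ B : ℝ, 0 < B →
      ∃ b' : ι → ℝ, Summable (fun i => w i * |b' i|) ∧ (∑' i, w i * |b' i|) ≤ B ∧
        eLpNorm (fun x => g₀ x - ∑' i, b' i * θ i x) r P ≤
          ENNReal.ofReal (wlow⁻¹ * max (B₀ - B) 0) * θbarr := by
  intro B hB
  obtain ⟨t, ht₀, ht₁, htB, htB'⟩ := exists_scaling_factor (B₀ := B₀) hB
  have hw : ∀ i, wlow ≤ w i := fun i => hwlow.1 ⟨i, rfl⟩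
  have hscale : (fun i => w i * |t * b i|) = fun i => t * (w i * |b i|) := by
    ext i; rw [abs_mul, abs_of_nonneg ht₀]; ring
  have hdiff : (fun x => g₀ x - ∑' i, t * b i * θ i x) =
      (1 - t) • fun x => ∑' i, b i * θ i x := by
    ext x; simp only [hg₀, mul_assoc, tsum_mul_left, Pi.smul_apply, smul_eq_mul]; ring
  refine ⟨fun i => t * b i, hscale ▸ hbsum.mul_left t, ?_, ?_⟩
  · rw [hscale, tsum_mul_left]
    exact (mul_le_mul_of_nonneg_left hB₀ ht₀).trans htB
  rw [hdiff, eLpNorm_const_smul, Real.enorm_of_nonneg (sub_nonneg.2 ht₁)]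
  calc ENNReal.ofReal (1 - t) * eLpNorm (fun x => ∑' i, b i * θ i x) r P
      ≤ ENNReal.ofReal (1 - t) * (ENNReal.ofReal (∑' i, |b i|) * θbarr) := by
        gcongr
        exact eLpNorm_tsum_mul_le hr (fun i => (hθmeas i).aestronglyMeasurable) hθr
          (summable_of_summable_weight_mul_abs hwpos hw hbsum)
    _ = ENNReal.ofReal ((1 - t) * ∑' i, |b i|) * θbarr := by
        rw [ENNReal.ofReal_mul (sub_nonneg.2 ht₁), mul_assoc]
    _ ≤ ENNReal.ofReal (wlow⁻¹ * max (B₀ - B) 0) * θbarr := by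
        gcongr ENNReal.ofReal ?_ * _
        calc (1 - t) * ∑' i, |b i| ≤ (1 - t) * (wlow⁻¹ * B₀) := by
              gcongr
              exact (tsum_abs_le_inv_mul_tsum_weight_mul_abs hwpos hw hbsum).trans
                (by gcongr)
          _ = wlow⁻¹ * ((1 - t) * B₀) := by ring
          _ ≤ wlow⁻¹ * max (B₀ - B) 0 := by gcongr

/-- Lemma 1 of the paper: if `g₀ = ∑ᵢ bᵢ θᵢ ∈ ℒ(B₀)` (pointwise), where the `θᵢ` are
measurable, uniformly bounded by `θ̄`, with `‖θᵢ‖_{L^r(P)} ≤ θ̄ᵣ` and weights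
`wᵢ ≥ w̲ > 0` (with `w̲` the infimum of the weights), then for any `B > 0` there are
coefficients `b'` with `∑ᵢ wᵢ |b'ᵢ| ≤ B` whose associated function `g' = ∑ᵢ b'ᵢ θᵢ`
satisfies `‖g₀ - g'‖_{L^r(P)} ≤ w̲⁻¹ θ̄ᵣ max (B₀ - B) 0`. -/
theorem stmt_0 {𝒳 : Type*} [MeasurableSpace 𝒳] (P : Measure 𝒳) [IsProbabilityMeasure P]
    {ι : Type*} (θ : ι → 𝒳 → ℝ) (θbar : ℝ) (hθmeas : ∀ i, Measurable (θ i))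
    (hθbd : ∀ i x, |θ i x| ≤ θbar)
    (r : ℝ≥0∞) (hr : 1 ≤ r) (θbarr : ℝ≥0∞) (hθbarr : θbarr < ∞)
    (hθr : ∀ i, eLpNorm (θ i) r P ≤ θbarr)
    (w : ι → ℝ) (wlow : ℝ) (hwlow : IsGLB (Set.range w) wlow) (hwpos : 0 < wlow)
    (g₀ : 𝒳 → ℝ) (b : ι → ℝ) (hbsum : Summable (fun i => w i * |b i|))
    (B₀ : ℝ) (hB₀ : ∑' i, w i * |b i| ≤ B₀)
    (hg₀ : ∀ x, g₀ x = ∑' i, b i * θ i x) :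
    ∀ B : ℝ, 0 < B →
      ∃ b' : ι → ℝ, Summable (fun i => w i * |b' i|) ∧ (∑' i, w i * |b' i|) ≤ B ∧
        eLpNorm (fun x => g₀ x - ∑' i, b' i * θ i x) r P ≤
          ENNReal.ofReal (wlow⁻¹ * max (B₀ - B) 0) * θbarr :=
  stmt_0_general P θ hθmeas r hr θbarr hθr w wlow hwlow hwpos g₀ b hbsum B₀ hB₀ hg₀
end

section
/- Let ι be an index type and θ_i : 𝒳 → ℝ (i ∈ ι) functions with sup_{i∈ι} sup_{x∈𝒳} |θ_i(x)| ≤ θ̄ < ∞, and let w : ι → ℝ satisfy w̲ := inf_{i∈ι} w_i > 0. Let g₀ : 𝒳 → ℝ be bounded. Then for every B̄ > 0, every B > 0, and every g ∈ ℒ(B), there exists g' ∈ ℒ(B̄) such that sup_{x∈𝒳} |g₀(x) − g'(x)| ≤ (θ̄/w̲)·max{B − B̄, 0} + sup_{x∈𝒳} |g₀(x) − g(x)|. Consequently, inf_{g∈ℒ(B̄)} ‖g₀ − g‖_∞ ≤ inf_{B>0} { (θ̄/w̲)·max{B − B̄, 0} + inf_{g∈ℒ(B)} ‖g₀ − g‖_∞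 }. -/
/-- Lemma 2 of the paper: for `θᵢ` uniformly bounded by `θ̄`, weights `wᵢ` with infimum
`w̲ > 0`, a bounded target `g₀`, and any `g ∈ ℒ(B)` whose uniform distance to `g₀` is at
most `M`, there is `g' ∈ ℒ(B̄)` with
`sup_x |g₀ x - g' x| ≤ (θ̄ / w̲) * max (B - B̄) 0 + M`. -/
theorem stmt_1 {𝒳 : Type*} {ι : Type*} (θ : ι → 𝒳 → ℝ) (θbar : ℝ)
    (hθbd : ∀ i x, |θ i x| ≤ θbar)
    (w : ι → ℝ) (wlow : ℝ) (hwlow : IsGLB (Set.range w) wlow) (hwpos : 0 < wlow)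
    (g₀ : 𝒳 → ℝ) (Cg₀ : ℝ) (hg₀b : ∀ x, |g₀ x| ≤ Cg₀)
    (Bbar B : ℝ) (hBbar : 0 < Bbar) (hB : 0 < B)
    (g : 𝒳 → ℝ) (b : ι → ℝ) (hbsum : Summable (fun i => w i * |b i|))
    (hbB : (∑' i, w i * |b i|) ≤ B) (hg : ∀ x, g x = ∑' i, b i * θ i x)
    (M : ℝ) (hM : ∀ x, |g₀ x - g x| ≤ M) :
    ∃ b' : ι → ℝ, Summable (fun i => w i * |b' i|) ∧ (∑' i, w i * |b' i|) ≤ Bbar ∧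
      ∀ x, |g₀ x - ∑' i, b' i * θ i x| ≤ θbar / wlow * max (B - Bbar) 0 + M := by
  -- ι is nonempty (else wlow would be a GLB of ∅, impossible in ℝ)
  have hι : Nonempty ι := by
    by_contra h
    rw [not_nonempty_iff] at h
    have he : Set.range w = ∅ := Set.range_eq_empty w
    rw [he] at hwlow
    have h1 : wlow + 1 ∈ lowerBounds (∅ : Set ℝ) := by
      intro x hx; exact hx.elim
    have := hwlow.2 h1
    linarith
  rcases isEmpty_or_nonempty 𝒳 with hX | hX
  · refine ⟨0, by simpa using summable_zero, by simp; positivity, fun x => (IsEmpty.false x).elim⟩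
  obtain ⟨x₀⟩ := hX
  obtain ⟨i₀⟩ := hι
  have hθnn : 0 ≤ θbar := le_trans (abs_nonneg _) (hθbd i₀ x₀)
  have hw : ∀ i, wlow ≤ w i := fun i => hwlow.1 ⟨i, rfl⟩
  set S := ∑' i, w i * |b i| with hS
  have hterm : ∀ i x, |b i * θ i x| ≤ θbar / wlow * (w i * |b i|) := by
    intro i x
    rw [abs_mul, div_mul_eq_mul_div, le_div_iff₀ hwpos]
    have h1 := hθbd i x
    have h2 := hw i
    have h3 := abs_nonneg (b i)
    have h4 := abs_nonneg (θ i x)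
    have ha : |b i| * |θ i x| ≤ |b i| * θbar := mul_le_mul_of_nonneg_left h1 h3
    nlinarith [mul_le_mul_of_nonneg_right ha hwpos.le,
      mul_le_mul_of_nonneg_right h2 (mul_nonneg h3 hθnn)]
  have hsum_bθ : ∀ x, Summable fun i => b i * θ i x := by
    intro x
    apply Summable.of_abs
    exact Summable.of_nonneg_of_le (fun i => abs_nonneg _) (fun i => hterm i x)
      (hbsum.mul_left (θbar / wlow))
  have hSnn : 0 ≤ S := tsum_nonneg fun i => mul_nonneg (le_trans hwpos.le (hw i)) (abs_nonneg _)
  have hbound : ∀ x, |∑' i, b i * θ i x| ≤ θbar / wlow * S := by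
    intro x
    have habs : Summable fun i => |b i * θ i x| :=
      Summable.of_nonneg_of_le (fun i => abs_nonneg _) (fun i => hterm i x)
        (hbsum.mul_left (θbar / wlow))
    have h1 : ‖∑' i, b i * θ i x‖ ≤ ∑' i, ‖b i * θ i x‖ :=
      norm_tsum_le_tsum_norm (by simpa only [Real.norm_eq_abs] using habs)
    simp only [Real.norm_eq_abs] at h1
    have h2 : ∑' i, |b i * θ i x| ≤ ∑' i, θbar / wlow * (w i * |b i|) :=
      Summable.tsum_le_tsum (fun i => hterm i x) habs (hbsum.mul_left _)
    calc |∑' i, b i * θ i x| ≤ ∑' i, |b i * θ i x| := h1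
      _ ≤ ∑' i, θbar / wlow * (w i * |b i|) := h2
      _ = θbar / wlow * S := tsum_mul_left
  have hcnn : 0 ≤ θbar / wlow * max (B - Bbar) 0 :=
    mul_nonneg (div_nonneg hθnn hwpos.le) (le_max_right _ _)
  by_cases hle : S ≤ Bbar
  · refine ⟨b, hbsum, hle, fun x => ?_⟩
    have := hM x
    rw [hg x] at this
    linarith
  · push_neg at hle
    have hSpos : 0 < S := lt_trans hBbar hle
    set lam := Bbar / S with hlam
    have hlampos : 0 < lam := div_pos hBbar hSpos
    have hlamle : lam ≤ 1 := by
      rw [hlam, div_le_one hSpos]; exact hle.le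
    refine ⟨fun i => lam * b i, ?_, ?_, ?_⟩
    · have heq : (fun i => w i * |lam * b i|) = fun i => lam * (w i * |b i|) := by
        funext i; rw [abs_mul, abs_of_pos hlampos]; ring
      rw [heq]; exact hbsum.mul_left _
    · have heq : (fun i => w i * |lam * b i|) = fun i => lam * (w i * |b i|) := by
        funext i; rw [abs_mul, abs_of_pos hlampos]; ring
      rw [heq, tsum_mul_left, ← hS, hlam, div_mul_cancel₀ _ hSpos.ne']
    · intro x
      have hT := hsum_bθ x
      set T := ∑' i, b i * θ i x with hTdef
      have hsum' : ∑' i, (lam * b i) * θ i x = lam * T := by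
        rw [hTdef, ← tsum_mul_left]
        congr 1; funext i; ring
      rw [hsum']
      have h1 : |g₀ x - lam * T| ≤ |g₀ x - T| + (1 - lam) * |T| := by
        have : g₀ x - lam * T = (g₀ x - T) + (1 - lam) * T := by ring
        rw [this]
        calc |(g₀ x - T) + (1 - lam) * T| ≤ |g₀ x - T| + |(1 - lam) * T| := abs_add_le _ _
          _ = |g₀ x - T| + (1 - lam) * |T| := by
              rw [abs_mul, abs_of_nonneg (by linarith : (0:ℝ) ≤ 1 - lam)]
      have h2 : |g₀ x - T| ≤ M := by
        have := hM x; rw [hg x] at this; exact this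
      have h3 : (1 - lam) * |T| ≤ (1 - lam) * (θbar / wlow * S) :=
        mul_le_mul_of_nonneg_left (hbound x) (by linarith)
      have h4 : (1 - lam) * (θbar / wlow * S) = θbar / wlow * (S - Bbar) := by
        have : lam * S = Bbar := by rw [hlam, div_mul_cancel₀ _ hSpos.ne']
        linear_combination (-(θbar / wlow)) * this
      have h5 : θbar / wlow * (S - Bbar) ≤ θbar / wlow * max (B - Bbar) 0 := by
        apply mul_le_mul_of_nonneg_left _ (div_nonneg hθnn hwpos.le)
        exact le_max_of_le_left (by linarith)
      linarith
end

section
/- Let μ be a measure on a measurable space Ω and let f, f' : Ω → ℝ be measurable functions with f(ω) ≥ f'(ω) for every ω ∈ Ω. Then (1/8)·∫_Ω (f − f')² e^{f'} dμ ≤ (1/2)·∫_Ω (e^{f/2} − e^{f'/2})² dμ. -/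
open MeasureTheory
open scoped ENNReal

namespace Real

/-- Writing `t = (b - a) / 2`, this is `t ≤ exp t - 1` scaled by `exp (a / 2)` and squared. -/
theorem sq_sub_mul_exp_le_four_mul_sq_exp_half_sub {a b : ℝ} (hab : a ≤ b) :
    (b - a) ^ 2 * exp a ≤ 4 * (exp (b / 2) - exp (a / 2)) ^ 2 := by
  set t := (b - a) / 2
  have ht : 0 ≤ t := by simp only [t]; linarith
  have hb : exp (b / 2) = exp t * exp (a / 2) := by rw [← exp_add]; simp only [t]; ring_nf
  have ha : exp a = exp (a / 2) ^ 2 := by rw [← exp_nat_mul]; ring_nf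
  calc (b - a) ^ 2 * exp a = 4 * (t * exp (a / 2)) ^ 2 := by rw [ha]; ring
    _ ≤ 4 * ((exp t - 1) * exp (a / 2)) ^ 2 := by
        gcongr
        linarith [add_one_le_exp t]
    _ = 4 * (exp (b / 2) - exp (a / 2)) ^ 2 := by rw [hb]; ring

end Real

theorem stmt_2_general {Ω : Type*} [MeasurableSpace Ω] (μ : Measure Ω)
    (f f' : Ω → ℝ)
    (hle : ∀ ω, f' ω ≤ f ω) :
    (1 / 8 : ℝ≥0∞) * ∫⁻ ω, ENNReal.ofReal ((f ω - f' ω) ^ 2 * Real.exp (f' ω)) ∂μ ≤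
      (1 / 2 : ℝ≥0∞) * ∫⁻ ω, ENNReal.ofReal ((Real.exp (f ω / 2) - Real.exp (f' ω / 2)) ^ 2) ∂μ := by
  have hpointwise : ∀ ω, ENNReal.ofReal ((f ω - f' ω) ^ 2 * Real.exp (f' ω)) ≤
      4 * ENNReal.ofReal ((Real.exp (f ω / 2) - Real.exp (f' ω / 2)) ^ 2) := fun ω => by
    rw [← ENNReal.ofReal_ofNat 4, ← ENNReal.ofReal_mul (by norm_num)]
    exact ENNReal.ofReal_le_ofReal (Real.sq_sub_mul_exp_le_four_mul_sq_exp_half_sub (hle ω))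
  calc (1 / 8 : ℝ≥0∞) * ∫⁻ ω, ENNReal.ofReal ((f ω - f' ω) ^ 2 * Real.exp (f' ω)) ∂μ
      ≤ 1 / 8 * ∫⁻ ω, 4 * ENNReal.ofReal ((Real.exp (f ω / 2) - Real.exp (f' ω / 2)) ^ 2) ∂μ := by
        gcongr with ω
        exact hpointwise ω
    _ = 1 / 8 * 4 * ∫⁻ ω, ENNReal.ofReal ((Real.exp (f ω / 2) - Real.exp (f' ω / 2)) ^ 2) ∂μ := by
        rw [lintegral_const_mul' _ _ ENNReal.ofNat_ne_top, mul_assoc]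
    _ = 1 / 2 * ∫⁻ ω, ENNReal.ofReal ((Real.exp (f ω / 2) - Real.exp (f' ω / 2)) ^ 2) ∂μ := by
        congr 1
        rw [← ENNReal.toReal_eq_toReal_iff' (by finiteness) (by finiteness)]
        norm_num

/-- Lemma A.1 of the supplementary material: for measurable `f ≥ f'`,
`(1/8) ∫ (f - f')² e^{f'} dμ ≤ (1/2) ∫ (e^{f/2} - e^{f'/2})² dμ`. -/
theorem stmt_2 {Ω : Type*} [MeasurableSpace Ω] (μ : Measure Ω)
    (f f' : Ω → ℝ) (hf : Measurable f) (hf' : Measurable f')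
    (hle : ∀ ω, f' ω ≤ f ω) :
    (1 / 8 : ℝ≥0∞) * ∫⁻ ω, ENNReal.ofReal ((f ω - f' ω) ^ 2 * Real.exp (f' ω)) ∂μ ≤
      (1 / 2 : ℝ≥0∞) * ∫⁻ ω, ENNReal.ofReal ((Real.exp (f ω / 2) - Real.exp (f' ω / 2)) ^ 2) ∂μ :=
  stmt_2_general μ f f' hle
end

section
/- For every real number x, (e^{x/2} − 1)² ≥ (x²/4)·min{1, eˣ}. -/
/-- For every real `x`, `(e^{x/2} - 1)^2 ≥ (x^2/4) * min 1 (e^x)`. -/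
theorem stmt_3 (x : ℝ) :
    (Real.exp (x / 2) - 1) ^ 2 ≥ x ^ 2 / 4 * min 1 (Real.exp x) := by
  rcases le_or_gt 0 x with hx | hx
  · rw [min_eq_left (Real.one_le_exp hx)]
    have h := Real.add_one_le_exp (x / 2)
    nlinarith [Real.exp_pos (x / 2)]
  · rw [min_eq_right (Real.exp_le_one_iff.mpr hx.le)]
    have h := Real.add_one_le_exp (-(x / 2))
    have h2 : Real.exp (x / 2) * Real.exp (-(x / 2)) = 1 := by
      rw [← Real.exp_add]; ring_nf; exact Real.exp_zero
    have h3 : Real.exp x = Real.exp (x / 2) ^ 2 := by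
      rw [← Real.exp_nat_mul]; ring_nf
    have key : (Real.exp (x / 2) - 1) ^ 2
        = Real.exp (x / 2) ^ 2 * (Real.exp (-(x / 2)) - 1) ^ 2 := by
      linear_combination (2 * Real.exp (x / 2) - Real.exp (x / 2) * Real.exp (-(x / 2)) - 1) * h2
    have hb2 : (Real.exp (-(x / 2)) - 1) ^ 2 ≥ x ^ 2 / 4 := by nlinarith
    rw [h3, key]
    nlinarith [sq_nonneg (Real.exp (x / 2)), Real.exp_pos (x / 2)]
end

section
/- Let μ be a finite measure on a measurable space Ω, let ḡ ∈ [0,∞), and let g₀, g : Ω → ℝ be measurable functions with |g₀(ω)| ≤ ḡ and |g(ω)| ≤ ḡ for every ω. Then 0 ≤ ∫_Ω [ (g₀ − g)·e^{g₀} − (e^{g₀} − e^{g}) ] dμ ≤ (e^{2ḡ}/2)·∫_Ω (g₀ − g)² e^{g₀} dμ. -/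
/-
With `a = g₀ ω` and `b = g ω`, the integrand is the Bregman divergence of `exp`,
`(a - b) eᵃ - (eᵃ - eᵇ) = eᵃ (e^{b-a} - 1 - (b - a))`. Taylor's theorem with Lagrange remainder
writes `eˣ - 1 - x = e^ξ x² / 2` with `ξ` between `0` and `x`; since `x = b - a ≤ 2ḡ` and `0 ≤ 2ḡ`,
this lies between `0` and `e^{2ḡ} x² / 2`. Integrating the pointwise bounds gives the claim.
-/

open MeasureTheory Set

namespace Real

theorem exists_exp_sub_one_sub_eq (x : ℝ) :
    ∃ ξ ∈ uIcc 0 x, exp x - 1 - x = exp ξ * x ^ 2 / 2 := by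
  rcases eq_or_ne x 0 with rfl | hx
  · exact ⟨0, by simp, by simp⟩
  obtain ⟨ξ, hξ, h⟩ :=
    taylor_mean_remainder_lagrange_iteratedDeriv (n := 1) hx.symm contDiff_exp.contDiffOn
  have hT : taylorWithinEval exp 1 (uIcc 0 x) 0 x = 1 + x := by
    rw [taylorWithinEval_succ, taylor_within_zero_eval, iteratedDerivWithin_one,
      (hasDerivAt_exp 0).hasDerivWithinAt.derivWithin (uniqueDiffOn_uIcc hx.symm 0 left_mem_uIcc)]
    simp
  rw [hT] at h
  refine ⟨ξ, uIoo_subset_uIcc_self hξ, ?_⟩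
  simpa [iteratedDeriv_eq_iterate, iter_deriv_exp, sub_sub] using h

theorem exp_sub_one_sub_le_of_le {x c : ℝ} (hxc : x ≤ c) (hc : 0 ≤ c) :
    exp x - 1 - x ≤ exp c * x ^ 2 / 2 := by
  obtain ⟨ξ, hξ, h⟩ := exists_exp_sub_one_sub_eq x
  have hξc : ξ ≤ c := hξ.2.trans (max_le hc hxc)
  rw [h]
  gcongr

theorem sub_mul_exp_sub_sub_exp_eq (a b : ℝ) :
    (a - b) * exp a - (exp a - exp b) = exp a * (exp (b - a) - 1 - (b - a)) := by
  rw [exp_sub]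
  field_simp
  ring

theorem sub_mul_exp_sub_sub_exp_nonneg (a b : ℝ) : 0 ≤ (a - b) * exp a - (exp a - exp b) := by
  rw [sub_mul_exp_sub_sub_exp_eq]
  have := add_one_le_exp (b - a)
  exact mul_nonneg (exp_pos a).le (by linarith)

theorem sub_mul_exp_sub_sub_exp_le {a b c : ℝ} (hc : 0 ≤ c) (hbc : b - a ≤ c) :
    (a - b) * exp a - (exp a - exp b) ≤ exp c / 2 * ((a - b) ^ 2 * exp a) := by
  calc (a - b) * exp a - (exp a - exp b) = exp a * (exp (b - a) - 1 - (b - a)) :=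
        sub_mul_exp_sub_sub_exp_eq a b
    _ ≤ exp a * (exp c * (b - a) ^ 2 / 2) := by
        gcongr
        exact exp_sub_one_sub_le_of_le hbc hc
    _ = exp c / 2 * ((a - b) ^ 2 * exp a) := by ring

end Real

theorem stmt_5_general {Ω : Type*} [MeasurableSpace Ω] (μ : Measure Ω) [IsFiniteMeasure μ]
    (gbar : ℝ) (g₀ g : Ω → ℝ)
    (hg₀ : Measurable g₀) (hg : Measurable g)
    (hg₀b : ∀ ω, |g₀ ω| ≤ gbar) (hgb : ∀ ω, |g ω| ≤ gbar) :
    0 ≤ ∫ ω, ((g₀ ω - g ω) * Real.exp (g₀ ω) - (Real.exp (g₀ ω) - Real.exp (g ω))) ∂μ ∧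
    ∫ ω, ((g₀ ω - g ω) * Real.exp (g₀ ω) - (Real.exp (g₀ ω) - Real.exp (g ω))) ∂μ ≤
      Real.exp (2 * gbar) / 2 * ∫ ω, (g₀ ω - g ω) ^ 2 * Real.exp (g₀ ω) ∂μ := by
  have hdiff : ∀ ω, |g₀ ω - g ω| ≤ 2 * gbar := fun ω =>
    (abs_sub _ _).trans (by linarith [hg₀b ω, hgb ω])
  have hint : Integrable (fun ω => (g₀ ω - g ω) ^ 2 * Real.exp (g₀ ω)) μ := by
    refine .of_bound (by fun_prop) ((2 * gbar) ^ 2 * Real.exp gbar) (ae_of_all _ fun ω => ?_)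
    rw [Real.norm_eq_abs, abs_of_nonneg (by positivity), ← sq_abs]
    gcongr
    · exact hdiff ω
    · exact (abs_le.1 (hg₀b ω)).2
  refine ⟨integral_nonneg fun ω => Real.sub_mul_exp_sub_sub_exp_nonneg _ _, ?_⟩
  rw [← integral_const_mul]
  refine integral_mono_of_nonneg (ae_of_all _ fun ω => Real.sub_mul_exp_sub_sub_exp_nonneg _ _)
    (hint.const_mul _) (ae_of_all _ fun ω => Real.sub_mul_exp_sub_sub_exp_le ?_ ?_)
  · linarith [abs_nonneg (g ω), hgb ω]
  · linarith [neg_abs_le (g₀ ω - g ω), hdiff ω]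

/-- Lemma A.2 of the supplementary material: for a finite measure `μ` and measurable
`g₀, g` bounded in absolute value by `ḡ`,
`0 ≤ ∫ [(g₀ - g) e^{g₀} - (e^{g₀} - e^g)] dμ ≤ (e^{2ḡ}/2) ∫ (g₀ - g)² e^{g₀} dμ`. -/
theorem stmt_5 {Ω : Type*} [MeasurableSpace Ω] (μ : Measure Ω) [IsFiniteMeasure μ]
    (gbar : ℝ) (hgbar : 0 ≤ gbar) (g₀ g : Ω → ℝ)
    (hg₀ : Measurable g₀) (hg : Measurable g)
    (hg₀b : ∀ ω, |g₀ ω| ≤ gbar) (hgb : ∀ ω, |g ω| ≤ gbar) :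
    0 ≤ ∫ ω, ((g₀ ω - g ω) * Real.exp (g₀ ω) - (Real.exp (g₀ ω) - Real.exp (g ω))) ∂μ ∧
    ∫ ω, ((g₀ ω - g ω) * Real.exp (g₀ ω) - (Real.exp (g₀ ω) - Real.exp (g ω))) ∂μ ≤
      Real.exp (2 * gbar) / 2 * ∫ ω, (g₀ ω - g ω) ^ 2 * Real.exp (g₀ ω) ∂μ :=
  stmt_5_general μ gbar g₀ g hg₀ hg hg₀b hgb
end

section
/- Let P be a finite measure on a measurable space Ω and let g₀ : Ω → ℝ be bounded and measurable. Then for every bounded measurable g : Ω → ℝ, ∫_Ω (g·e^{g₀} − e^{g}) dP ≤ ∫_Ω (g₀·e^{g₀} − e^{g₀}) dP, with equality if and only if g = g₀ P-almost everywhere. -/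
open MeasureTheory

lemma key_ineq (a x : ℝ) : 0 ≤ Real.exp x - Real.exp a - (x - a) * Real.exp a := by
  have h := Real.add_one_le_exp (x - a)
  have h2 : (x - a + 1) * Real.exp a ≤ Real.exp (x - a) * Real.exp a := by
    apply mul_le_mul_of_nonneg_right h (Real.exp_nonneg a)
  rw [← Real.exp_add] at h2
  ring_nf at h2 ⊢
  nlinarith [h2]

lemma key_eq (a x : ℝ) (h : Real.exp x - Real.exp a - (x - a) * Real.exp a = 0) : x = a := by
  by_contra hne
  have h1 : x - a ≠ 0 := sub_ne_zero.mpr hne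
  have h2 := Real.add_one_lt_exp h1
  have h3 : (x - a + 1) * Real.exp a < Real.exp (x - a) * Real.exp a := by
    apply mul_lt_mul_of_pos_right h2 (Real.exp_pos a)
  rw [← Real.exp_add] at h3
  ring_nf at h3
  nlinarith [h3, h]

/-- Section A.2 of the supplementary material: the population log-likelihood
`L(g) = ∫ (g e^{g₀} - e^g) dP` is maximized at `g₀`, uniquely up to `P`-a.e. equality,
over bounded measurable functions `g`. -/
theorem stmt_6 {Ω : Type*} [MeasurableSpace Ω] (P : Measure Ω) [IsFiniteMeasure P]
    (g₀ : Ω → ℝ) (hg₀ : Measurable g₀) (C₀ : ℝ) (hg₀b : ∀ ω, |g₀ ω| ≤ C₀)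
    (g : Ω → ℝ) (hg : Measurable g) (C : ℝ) (hgb : ∀ ω, |g ω| ≤ C) :
    (∫ ω, (g ω * Real.exp (g₀ ω) - Real.exp (g ω)) ∂P ≤
        ∫ ω, (g₀ ω * Real.exp (g₀ ω) - Real.exp (g₀ ω)) ∂P) ∧
    ((∫ ω, (g ω * Real.exp (g₀ ω) - Real.exp (g ω)) ∂P =
        ∫ ω, (g₀ ω * Real.exp (g₀ ω) - Real.exp (g₀ ω)) ∂P) ↔ g =ᵐ[P] g₀) := by
  -- integrability
  have hexp0 : ∀ ω, Real.exp (g₀ ω) ≤ Real.exp C₀ := fun ω =>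
    Real.exp_le_exp.mpr ((abs_le.mp (hg₀b ω)).2)
  have hexp : ∀ ω, Real.exp (g ω) ≤ Real.exp C := fun ω =>
    Real.exp_le_exp.mpr ((abs_le.mp (hgb ω)).2)
  have hmeasF : Measurable fun ω => g ω * Real.exp (g₀ ω) - Real.exp (g ω) :=
    (hg.mul hg₀.exp).sub hg.exp
  have hmeasF0 : Measurable fun ω => g₀ ω * Real.exp (g₀ ω) - Real.exp (g₀ ω) :=
    (hg₀.mul hg₀.exp).sub hg₀.exp
  have hboundF : ∀ (f : Ω → ℝ) (D : ℝ), (∀ ω, |f ω| ≤ D) → Measurable f →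
      Integrable (fun ω => f ω * Real.exp (g₀ ω) - Real.exp (f ω)) P := by
    intro f D hD hf
    apply (integrable_const (D * Real.exp C₀ + Real.exp D)).mono'
      ((hf.mul hg₀.exp).sub hf.exp).aestronglyMeasurable
    filter_upwards with ω
    have h1 : |f ω * Real.exp (g₀ ω)| ≤ D * Real.exp C₀ := by
      rw [abs_mul, abs_of_nonneg (Real.exp_nonneg _)]
      have hD0 : 0 ≤ D := le_trans (abs_nonneg _) (hD ω)
      exact mul_le_mul (hD ω) (hexp0 ω) (Real.exp_nonneg _) hD0
    have h2 : |Real.exp (f ω)| ≤ Real.exp D := by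
      rw [abs_of_nonneg (Real.exp_nonneg _)]
      exact Real.exp_le_exp.mpr ((abs_le.mp (hD ω)).2)
    calc ‖f ω * Real.exp (g₀ ω) - Real.exp (f ω)‖
        ≤ |f ω * Real.exp (g₀ ω)| + |Real.exp (f ω)| := abs_sub (_) (_)
      _ ≤ D * Real.exp C₀ + Real.exp D := add_le_add h1 h2
  have hIg : Integrable (fun ω => g ω * Real.exp (g₀ ω) - Real.exp (g ω)) P :=
    hboundF g C hgb hg
  have hIg0 : Integrable (fun ω => g₀ ω * Real.exp (g₀ ω) - Real.exp (g₀ ω)) P :=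
    hboundF g₀ C₀ hg₀b hg₀
  -- pointwise inequality
  have hpt : ∀ ω, (g ω * Real.exp (g₀ ω) - Real.exp (g ω)) ≤
      (g₀ ω * Real.exp (g₀ ω) - Real.exp (g₀ ω)) := by
    intro ω
    have := key_ineq (g₀ ω) (g ω)
    nlinarith [this]
  have hle := integral_mono hIg hIg0 hpt
  refine ⟨hle, ?_, ?_⟩
  · -- equality → a.e. equal
    intro heq
    have hdiff : Integrable (fun ω => (g₀ ω * Real.exp (g₀ ω) - Real.exp (g₀ ω)) -
        (g ω * Real.exp (g₀ ω) - Real.exp (g ω))) P := hIg0.sub hIg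
    have hzero : ∫ ω, ((g₀ ω * Real.exp (g₀ ω) - Real.exp (g₀ ω)) -
        (g ω * Real.exp (g₀ ω) - Real.exp (g ω))) ∂P = 0 := by
      rw [integral_sub hIg0 hIg, heq, sub_self]
    have hnn : 0 ≤ᵐ[P] fun ω => (g₀ ω * Real.exp (g₀ ω) - Real.exp (g₀ ω)) -
        (g ω * Real.exp (g₀ ω) - Real.exp (g ω)) := by
      filter_upwards with ω
      simpa using sub_nonneg.mpr (hpt ω)
    have hae := (integral_eq_zero_iff_of_nonneg_ae hnn hdiff).mp hzero
    have hae' : ∀ᵐ ω ∂P, (g₀ ω * Real.exp (g₀ ω) - Real.exp (g₀ ω)) -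
        (g ω * Real.exp (g₀ ω) - Real.exp (g ω)) = 0 := by
      filter_upwards [hae] with ω hω
      simpa using hω
    filter_upwards [hae'] with ω hω
    apply key_eq (g₀ ω) (g ω)
    nlinarith [hω]
  · -- a.e. equal → equality
    intro hae
    apply integral_congr_ae
    filter_upwards [hae] with ω hω
    rw [hω]
end

section
/- Fix T > 0, jump times 0 < t₁ < ⋯ < t_n ≤ T, a measurable path X : [0,T] → ℝ^K, and ḡ ∈ [0,∞). Let f, h : ℝ^K → ℝ be measurable with sup_x |f(x)| ≤ ḡ and sup_x |h(x)| ≤ ḡ. Then for every t ∈ [0,1], L_T(f + t(h − f)) ≥ L_T(f) + t·D_T(f, h − f) − 2t²·T·e^{ḡ}·ḡ². -/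
/-!
Along the segment `g_t = f + t (h - f)` the event sum is affine in `t`, so only the
compensator `∫₀ᵀ exp (g_t (X s)) ds` has curvature. Pointwise, Taylor's theorem with Lagrange
remainder bounds `exp (g_t)` by its tangent at `t = 0` plus `exp ξ · t² (h - f)² / 2`,
where `ξ` lies between `f` and `g_t`, hence `|ξ| ≤ ḡ`, and `(h - f)² ≤ 4 ḡ²`.
Integrating over `[0, T]` gives the quadratic loss `2 t² T e^{ḡ} ḡ²`.
-/

open MeasureTheory Set

/-- The sample log-likelihood `L_T(g) = ∑ᵢ g(X(tᵢ)) - ∫₀ᵀ exp(g(X(t))) dt`. -/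
noncomputable def sampleLogLik (K : ℕ) (T : ℝ) (n : ℕ) (t : Fin n → ℝ)
    (X : ℝ → (Fin K → ℝ)) (g : (Fin K → ℝ) → ℝ) : ℝ :=
  (∑ i, g (X (t i))) - ∫ s in (0 : ℝ)..T, Real.exp (g (X s))

/-- The directional derivative
`D_T(g,h) = ∑ᵢ h(X(tᵢ)) - ∫₀ᵀ h(X(t)) exp(g(X(t))) dt`. -/
noncomputable def dirDeriv (K : ℕ) (T : ℝ) (n : ℕ) (t : Fin n → ℝ)
    (X : ℝ → (Fin K → ℝ)) (g h : (Fin K → ℝ) → ℝ) : ℝ :=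
  (∑ i, h (X (t i))) - ∫ s in (0 : ℝ)..T, h (X s) * Real.exp (g (X s))

theorem Real.exp_le_exp_add_mul_exp_add_sq {a y M : ℝ} (ha : a ≤ M) (hy : y ≤ M) :
    Real.exp y ≤ Real.exp a + (y - a) * Real.exp a + Real.exp M * (y - a) ^ 2 / 2 := by
  rcases eq_or_ne a y with rfl | hay
  · simp
  obtain ⟨ξ, hξ, hTaylor⟩ := taylor_mean_remainder_lagrange_iteratedDeriv (n := 1) hay
    Real.contDiff_exp.contDiffOn
  have hderiv : derivWithin Real.exp (uIcc a y) a = Real.exp a :=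
    (Real.hasDerivAt_exp a).hasDerivWithinAt.derivWithin
      (uniqueDiffOn_uIcc hay a left_mem_uIcc)
  have hξM : ξ ≤ M := by
    rcases le_total a y with h | h
    · rw [uIoo_of_le h] at hξ; linarith [hξ.2]
    · rw [uIoo_of_ge h] at hξ; linarith [hξ.2]
  simp only [taylorWithinEval_succ, taylor_within_zero_eval, iteratedDeriv_eq_iterate,
    Real.iter_deriv_exp, smul_eq_mul] at hTaylor
  norm_num [hderiv] at hTaylor
  nlinarith [Real.exp_le_exp.mpr hξM, sq_nonneg (y - a)]

theorem abs_add_mul_sub_le {a b t C : ℝ} (ha : |a| ≤ C) (hb : |b| ≤ C)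
    (ht : t ∈ Icc (0 : ℝ) 1) : |a + t * (b - a)| ≤ C := by
  obtain ⟨ha₁, ha₂⟩ := abs_le.mp ha
  obtain ⟨hb₁, hb₂⟩ := abs_le.mp hb
  obtain ⟨ht₀, ht₁⟩ := ht
  exact abs_le.mpr ⟨by nlinarith, by nlinarith⟩

theorem Real.exp_add_mul_sub_le {a b t C : ℝ} (ha : |a| ≤ C) (hb : |b| ≤ C)
    (ht : t ∈ Icc (0 : ℝ) 1) :
    Real.exp (a + t * (b - a)) ≤
      Real.exp a + t * ((b - a) * Real.exp a) + 2 * t ^ 2 * Real.exp C * C ^ 2 := by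
  have hsq : (b - a) ^ 2 ≤ 4 * C ^ 2 := by
    obtain ⟨ha₁, ha₂⟩ := abs_le.mp ha
    obtain ⟨hb₁, hb₂⟩ := abs_le.mp hb
    nlinarith
  have hTaylor := Real.exp_le_exp_add_mul_exp_add_sq (abs_le.mp ha).2
    (abs_le.mp (abs_add_mul_sub_le ha hb ht)).2
  have hrem := mul_le_mul_of_nonneg_left hsq (mul_nonneg (sq_nonneg t) (Real.exp_pos C).le)
  simp only [add_sub_cancel_left, mul_pow] at hTaylor
  nlinarith

theorem IntervalIntegrable.comp_of_abs_le {G : ℝ × ℝ → ℝ} (hG : Continuous G)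
    {u v : ℝ → ℝ} (hu : Measurable u) (hv : Measurable v) {C : ℝ}
    (huC : ∀ s, |u s| ≤ C) (hvC : ∀ s, |v s| ≤ C) (a b : ℝ) :
    IntervalIntegrable (fun s => G (u s, v s)) volume a b := by
  have hsquare : IsCompact (Icc (-C) C ×ˢ Icc (-C) C) := isCompact_Icc.prod isCompact_Icc
  obtain ⟨M, hM⟩ := hsquare.exists_bound_of_continuousOn hG.continuousOn
  exact intervalIntegrable_const.mono_fun'
    (hG.measurable.comp (hu.prodMk hv)).aestronglyMeasurable
    (ae_of_all _ fun s => hM _ ⟨abs_le.mp (huC s), abs_le.mp (hvC s)⟩)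

theorem stmt_9_general (K : ℕ) (T : ℝ) (hT : 0 < T) (n : ℕ) (tj : Fin n → ℝ)
    (X : ℝ → (Fin K → ℝ)) (hX : Measurable X)
    (gbar : ℝ)
    (f h : (Fin K → ℝ) → ℝ) (hf : Measurable f) (hh : Measurable h)
    (hfb : ∀ x, |f x| ≤ gbar) (hhb : ∀ x, |h x| ≤ gbar) :
    ∀ t : ℝ, t ∈ Set.Icc (0 : ℝ) 1 →
      sampleLogLik K T n tj X (fun x => f x + t * (h x - f x)) ≥
        sampleLogLik K T n tj X f + t * dirDeriv K T n tj X f (fun x => h x - f x) -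
          2 * t ^ 2 * T * Real.exp gbar * gbar ^ 2 := by
  intro t ht
  set c := 2 * t ^ 2 * Real.exp gbar * gbar ^ 2
  have hint {G : ℝ × ℝ → ℝ} (hG : Continuous G) :
      IntervalIntegrable (fun s => G (f (X s), h (X s))) volume 0 T :=
    IntervalIntegrable.comp_of_abs_le hG (hf.comp hX) (hh.comp hX) (fun s => hfb (X s))
      (fun s => hhb (X s)) 0 T
  have hexp : IntervalIntegrable (fun s => Real.exp (f (X s))) volume 0 T :=
    hint (G := fun p => Real.exp p.1) (by fun_prop)
  have hslope : IntervalIntegrable (fun s => (h (X s) - f (X s)) * Real.exp (f (X s)))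
      volume 0 T :=
    hint (G := fun p => (p.2 - p.1) * Real.exp p.1) (by fun_prop)
  have hcompensator : ∫ s in (0 : ℝ)..T, Real.exp (f (X s) + t * (h (X s) - f (X s))) ≤
      (∫ s in (0 : ℝ)..T, Real.exp (f (X s))) +
        t * (∫ s in (0 : ℝ)..T, (h (X s) - f (X s)) * Real.exp (f (X s))) + c * T := by
    have htangent := hexp.add (hslope.const_mul t)
    calc _ ≤ ∫ s in (0 : ℝ)..T,
          (Real.exp (f (X s)) + t * ((h (X s) - f (X s)) * Real.exp (f (X s))) + c) :=
          intervalIntegral.integral_mono_on hT.le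
            (hint (G := fun p => Real.exp (p.1 + t * (p.2 - p.1))) (by fun_prop))
            (htangent.add intervalIntegrable_const)
            fun s _ => Real.exp_add_mul_sub_le (hfb (X s)) (hhb (X s)) ht
      _ = _ := by
          rw [intervalIntegral.integral_add htangent intervalIntegrable_const,
            intervalIntegral.integral_add hexp (hslope.const_mul t),
            intervalIntegral.integral_const_mul, intervalIntegral.integral_const, smul_eq_mul]
          ring
  simp only [sampleLogLik, dirDeriv, Finset.sum_add_distrib, ← Finset.mul_sum, ge_iff_le]
  linarith

/-- Curvature lower bound from the proof of Theorem 3: for measurable `f, h` bounded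
by `ḡ` and `t ∈ [0,1]`,
`L_T(f + t(h - f)) ≥ L_T(f) + t D_T(f, h - f) - 2 t² T e^{ḡ} ḡ²`. -/
theorem stmt_9 (K : ℕ) (T : ℝ) (hT : 0 < T) (n : ℕ) (tj : Fin n → ℝ)
    (htj : StrictMono tj) (htj0 : ∀ i, 0 < tj i) (htjT : ∀ i, tj i ≤ T)
    (X : ℝ → (Fin K → ℝ)) (hX : Measurable X)
    (gbar : ℝ) (hgbar : 0 ≤ gbar)
    (f h : (Fin K → ℝ) → ℝ) (hf : Measurable f) (hh : Measurable h)
    (hfb : ∀ x, |f x| ≤ gbar) (hhb : ∀ x, |h x| ≤ gbar) :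
    ∀ t : ℝ, t ∈ Set.Icc (0 : ℝ) 1 →
      sampleLogLik K T n tj X (fun x => f x + t * (h x - f x)) ≥
        sampleLogLik K T n tj X f + t * dirDeriv K T n tj X f (fun x => h x - f x) -
          2 * t ^ 2 * T * Real.exp gbar * gbar ^ 2 :=
  stmt_9_general K T hT n tj X hX gbar f h hf hh hfb hhb
end

section
/- Let μ be a finite measure on a measurable space Ω, let ḡ ∈ [0,∞), and let g₁, g₂ : Ω → ℝ be measurable with |g₁(ω)| ≤ ḡ and |g₂(ω)| ≤ ḡ for every ω. Then ∫_Ω [ (g₁ − g₂)·e^{g₁} − (e^{g₁} − e^{g₂}) ] dμ ≤ (e^{3ḡ}/2)·∫_Ω (g₁ − g₂)² dμ. -/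
open MeasureTheory

/-- For `t ≤ 0`, `exp t ≤ 1 + t + t²/2`. -/
lemma exp_le_one_add_add_sq_half {t : ℝ} (ht : t ≤ 0) :
    Real.exp t ≤ 1 + t + t ^ 2 / 2 := by
  have hD : ∀ x : ℝ, HasDerivAt (fun s : ℝ => 1 + s + s ^ 2 / 2 - Real.exp s)
      (1 + x - Real.exp x) x := by
    intro x
    have h1 : HasDerivAt (fun s : ℝ => s ^ 2 / 2) x x := by
      simpa using (hasDerivAt_pow 2 x).div_const 2
    have h2 : HasDerivAt (fun s : ℝ => 1 + s) 1 x := (hasDerivAt_id x).const_add 1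
    exact (h2.add h1).sub (Real.hasDerivAt_exp x)
  have hanti : AntitoneOn (fun s : ℝ => 1 + s + s ^ 2 / 2 - Real.exp s) (Set.Iic 0) := by
    apply antitoneOn_of_deriv_nonpos (convex_Iic 0)
    · exact (Continuous.continuousOn (by continuity))
    · intro x hx
      exact (hD x).differentiableAt.differentiableWithinAt
    · intro x hx
      rw [(hD x).deriv]
      have := Real.add_one_le_exp x
      linarith
  have := hanti (Set.mem_Iic.2 ht) (Set.mem_Iic.2 le_rfl) ht
  simp only [Real.exp_zero] at this
  nlinarith [this]

/-- For `t ≥ 0`, `exp t ≤ 1 + t + (t²/2) exp t`. -/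
lemma exp_le_one_add_add_sq_half_exp {t : ℝ} (ht : 0 ≤ t) :
    Real.exp t ≤ 1 + t + t ^ 2 / 2 * Real.exp t := by
  have hD : ∀ x : ℝ, HasDerivAt (fun s : ℝ => 1 + s + s ^ 2 / 2 * Real.exp s - Real.exp s)
      (1 + (x * Real.exp x + x ^ 2 / 2 * Real.exp x) - Real.exp x) x := by
    intro x
    have h1 : HasDerivAt (fun s : ℝ => s ^ 2 / 2) x x := by
      simpa using (hasDerivAt_pow 2 x).div_const 2
    have h2 : HasDerivAt (fun s : ℝ => s ^ 2 / 2 * Real.exp s)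
        (x * Real.exp x + x ^ 2 / 2 * Real.exp x) x := by
      exact h1.mul (Real.hasDerivAt_exp x)
    have h3 : HasDerivAt (fun s : ℝ => 1 + s) 1 x := (hasDerivAt_id x).const_add 1
    exact (h3.add h2).sub (Real.hasDerivAt_exp x)
  have hmono : MonotoneOn (fun s : ℝ => 1 + s + s ^ 2 / 2 * Real.exp s - Real.exp s)
      (Set.Ici 0) := by
    apply monotoneOn_of_deriv_nonneg (convex_Ici 0)
    · exact (Continuous.continuousOn (by continuity))
    · intro x hx
      exact (hD x).differentiableAt.differentiableWithinAt
    · intro x hx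
      rw [(hD x).deriv]
      -- exp x * (1 - x) ≤ 1 since 1 - x ≤ exp (-x)
      have h5 : 1 - x ≤ Real.exp (-x) := by
        have := Real.add_one_le_exp (-x); linarith
      have h6 : Real.exp x * (1 - x) ≤ 1 := by
        have := mul_le_mul_of_nonneg_left h5 (Real.exp_pos x).le
        rwa [← Real.exp_add, add_neg_cancel, Real.exp_zero] at this
      nlinarith [Real.exp_pos x, sq_nonneg x]
  have := hmono (Set.mem_Ici.2 le_rfl) (Set.mem_Ici.2 ht) ht
  simp only [Real.exp_zero] at this
  nlinarith [this]

/-- Pointwise key inequality. -/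
lemma key_pointwise (G a b : ℝ) (hG : 0 ≤ G) (ha : |a| ≤ G) (hb : |b| ≤ G) :
    (a - b) * Real.exp a - (Real.exp a - Real.exp b) ≤
      Real.exp (3 * G) / 2 * (a - b) ^ 2 := by
  have ha' : a ≤ G := (abs_le.1 ha).2
  have hb' : b ≤ G := (abs_le.1 hb).2
  have haG : Real.exp a ≤ Real.exp (3 * G) := Real.exp_le_exp.2 (by linarith)
  have hbG : Real.exp b ≤ Real.exp (3 * G) := Real.exp_le_exp.2 (by linarith)
  set x := a - b with hx
  have hbe : Real.exp b = Real.exp a * Real.exp (-x) := by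
    rw [← Real.exp_add]; congr 1; simp [hx]
  rcases le_or_gt 0 x with hx0 | hx0
  · -- x ≥ 0 : exp(-x) ≤ 1 - x + x²/2
    have h1 : Real.exp (-x) ≤ 1 + (-x) + (-x) ^ 2 / 2 :=
      exp_le_one_add_add_sq_half (by linarith)
    have h2 : Real.exp b ≤ Real.exp a * (1 - x + x ^ 2 / 2) := by
      rw [hbe]
      have := mul_le_mul_of_nonneg_left h1 (Real.exp_pos a).le
      nlinarith [this]
    nlinarith [Real.exp_pos a, sq_nonneg x]
  · -- x < 0 : exp(-x) ≤ 1 - x + (x²/2) exp(-x)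
    have h1 : Real.exp (-x) ≤ 1 + (-x) + (-x) ^ 2 / 2 * Real.exp (-x) :=
      exp_le_one_add_add_sq_half_exp (by linarith)
    have h2 : Real.exp b ≤ Real.exp a * (1 - x) + x ^ 2 / 2 * Real.exp b := by
      rw [hbe]
      have := mul_le_mul_of_nonneg_left h1 (Real.exp_pos a).le
      nlinarith [this]
    nlinarith [Real.exp_pos a, Real.exp_pos b, sq_nonneg x]

/-- Kullback-Leibler upper bound from the proof of Theorem 2: for a finite measure `μ`
and measurable `g₁, g₂` bounded in absolute value by `ḡ`,
`∫ [(g₁ - g₂) e^{g₁} - (e^{g₁} - e^{g₂})] dμ ≤ (e^{3ḡ}/2) ∫ (g₁ - g₂)² dμ`. -/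
theorem stmt_13 {Ω : Type*} [MeasurableSpace Ω] (μ : Measure Ω) [IsFiniteMeasure μ]
    (gbar : ℝ) (hgbar : 0 ≤ gbar) (g₁ g₂ : Ω → ℝ)
    (hg₁ : Measurable g₁) (hg₂ : Measurable g₂)
    (hg₁b : ∀ ω, |g₁ ω| ≤ gbar) (hg₂b : ∀ ω, |g₂ ω| ≤ gbar) :
    ∫ ω, ((g₁ ω - g₂ ω) * Real.exp (g₁ ω) - (Real.exp (g₁ ω) - Real.exp (g₂ ω))) ∂μ ≤
      Real.exp (3 * gbar) / 2 * ∫ ω, (g₁ ω - g₂ ω) ^ 2 ∂μ := by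
  have habs : ∀ ω, |g₁ ω - g₂ ω| ≤ 2 * gbar := fun ω => by
    have := abs_sub (g₁ ω) (g₂ ω)
    calc |g₁ ω - g₂ ω| ≤ |g₁ ω| + |g₂ ω| := abs_sub _ _
      _ ≤ 2 * gbar := by have := hg₁b ω; have := hg₂b ω; linarith
  have hmeas1 : Measurable fun ω =>
      (g₁ ω - g₂ ω) * Real.exp (g₁ ω) - (Real.exp (g₁ ω) - Real.exp (g₂ ω)) := by
    exact ((hg₁.sub hg₂).mul (Real.measurable_exp.comp hg₁)).sub
      ((Real.measurable_exp.comp hg₁).sub (Real.measurable_exp.comp hg₂))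
  have hmeas2 : Measurable fun ω => (g₁ ω - g₂ ω) ^ 2 := (hg₁.sub hg₂).pow_const 2
  have hint1 : Integrable (fun ω =>
      (g₁ ω - g₂ ω) * Real.exp (g₁ ω) - (Real.exp (g₁ ω) - Real.exp (g₂ ω))) μ := by
    refine ⟨hmeas1.aestronglyMeasurable, ?_⟩
    apply HasFiniteIntegral.of_bounded
      (C := 2 * gbar * Real.exp gbar + 2 * Real.exp gbar)
    filter_upwards with ω
    have e1 : Real.exp (g₁ ω) ≤ Real.exp gbar := Real.exp_le_exp.2 (abs_le.1 (hg₁b ω)).2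
    have e2 : Real.exp (g₂ ω) ≤ Real.exp gbar := Real.exp_le_exp.2 (abs_le.1 (hg₂b ω)).2
    have e3 := habs ω
    have p1 : (0:ℝ) < Real.exp (g₁ ω) := Real.exp_pos _
    have p2 : (0:ℝ) < Real.exp (g₂ ω) := Real.exp_pos _
    rw [Real.norm_eq_abs]
    have hmul : |(g₁ ω - g₂ ω) * Real.exp (g₁ ω)| ≤ 2 * gbar * Real.exp gbar := by
      rw [abs_mul, abs_of_pos p1]
      exact mul_le_mul e3 e1 p1.le (by linarith)
    calc |(g₁ ω - g₂ ω) * Real.exp (g₁ ω) - (Real.exp (g₁ ω) - Real.exp (g₂ ω))|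
        ≤ |(g₁ ω - g₂ ω) * Real.exp (g₁ ω)| + |Real.exp (g₁ ω) - Real.exp (g₂ ω)| :=
          abs_sub _ _
      _ ≤ 2 * gbar * Real.exp gbar + 2 * Real.exp gbar := by
          have : |Real.exp (g₁ ω) - Real.exp (g₂ ω)| ≤ 2 * Real.exp gbar := by
            rw [abs_sub_le_iff]; constructor <;> linarith
          linarith
  have hint2 : Integrable (fun ω => (g₁ ω - g₂ ω) ^ 2) μ := by
    refine ⟨hmeas2.aestronglyMeasurable, ?_⟩
    apply HasFiniteIntegral.of_bounded (C := (2 * gbar) ^ 2)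
    filter_upwards with ω
    rw [Real.norm_eq_abs, abs_of_nonneg (sq_nonneg _)]
    calc (g₁ ω - g₂ ω) ^ 2 = |g₁ ω - g₂ ω| ^ 2 := (sq_abs _).symm
      _ ≤ (2 * gbar) ^ 2 := pow_le_pow_left₀ (abs_nonneg _) (habs ω) 2
  calc ∫ ω, ((g₁ ω - g₂ ω) * Real.exp (g₁ ω) - (Real.exp (g₁ ω) - Real.exp (g₂ ω))) ∂μ
      ≤ ∫ ω, Real.exp (3 * gbar) / 2 * (g₁ ω - g₂ ω) ^ 2 ∂μ := by
        apply integral_mono hint1 (hint2.const_mul _)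
        intro ω
        exact key_pointwise gbar (g₁ ω) (g₂ ω) hgbar (hg₁b ω) (hg₂b ω)
    _ = Real.exp (3 * gbar) / 2 * ∫ ω, (g₁ ω - g₂ ω) ^ 2 ∂μ :=
        MeasureTheory.integral_const_mul _ _
end

section
/- Let μ be a measure on a measurable space Ω, let c ≥ 0, and let f, f' : Ω → ℝ be measurable with |f(ω) − f'(ω)| ≤ c for every ω ∈ Ω. Then (e^{−c}/8)·∫_Ω (f − f')² e^{f'} dμ ≤ (1/2)·∫_Ω (e^{f/2} − e^{f'/2})² dμ. -/
/-!
With `x = f - f'`, the integrands compare pointwise: `(e^{f/2} - e^{f'/2})² = e^{f'} (e^{x/2} - 1)²`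
and `(e^{x/2} - 1)² ≥ (x²/4) min{1, eˣ} ≥ (x²/4) e^{-c}`; the integral inequality then follows by
monotonicity of the lower integral.
-/

open MeasureTheory
open scoped ENNReal

namespace Real

theorem sq_div_four_mul_min_one_exp_le (x : ℝ) :
    x ^ 2 / 4 * min 1 (exp x) ≤ (exp (x / 2) - 1) ^ 2 := by
  rcases le_or_gt 0 x with hx | hx
  · rw [min_eq_left (one_le_exp hx), mul_one]
    have hlin : x / 2 ≤ exp (x / 2) - 1 := by linarith [add_one_le_exp (x / 2)]
    calc x ^ 2 / 4 = (x / 2) ^ 2 := by ring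
      _ ≤ (exp (x / 2) - 1) ^ 2 := pow_le_pow_left₀ (by linarith) hlin 2
  · have hexp : exp x = exp (x / 2) ^ 2 := by rw [← exp_nat_mul]; ring_nf
    rw [min_eq_right (exp_le_one_iff.mpr hx.le), hexp]
    have hlin : -x / 2 * exp (x / 2) ≤ 1 - exp (x / 2) := by
      have h := mul_le_mul_of_nonneg_left (add_one_le_exp (-x / 2)) (exp_pos (x / 2)).le
      rw [← exp_add, show x / 2 + -x / 2 = 0 by ring, exp_zero] at h
      linarith
    calc x ^ 2 / 4 * exp (x / 2) ^ 2 = (-x / 2 * exp (x / 2)) ^ 2 := by ring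
      _ ≤ (1 - exp (x / 2)) ^ 2 :=
        pow_le_pow_left₀ (mul_nonneg (by linarith) (exp_pos _).le) hlin 2
      _ = (exp (x / 2) - 1) ^ 2 := by ring

theorem exp_neg_le_min_one_exp {x c : ℝ} (h : |x| ≤ c) : exp (-c) ≤ min 1 (exp x) :=
  le_min (exp_le_one_iff.mpr (by linarith [abs_nonneg x]))
    (exp_le_exp.mpr (by linarith [neg_abs_le x]))

theorem sq_exp_half_sub_exp_half (a b : ℝ) :
    (exp (a / 2) - exp (b / 2)) ^ 2 = exp b * (exp ((a - b) / 2) - 1) ^ 2 := by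
  have ha : exp (a / 2) = exp (b / 2) * exp ((a - b) / 2) := by rw [← exp_add]; ring_nf
  have hb : exp b = exp (b / 2) ^ 2 := by rw [← exp_nat_mul]; ring_nf
  rw [ha, hb]
  ring

theorem exp_neg_div_eight_mul_le_half_sq_exp_half_sub {a b c : ℝ} (h : |a - b| ≤ c) :
    exp (-c) / 8 * ((a - b) ^ 2 * exp b) ≤ 1 / 2 * (exp (a / 2) - exp (b / 2)) ^ 2 := by
  rw [sq_exp_half_sub_exp_half]
  calc exp (-c) / 8 * ((a - b) ^ 2 * exp b)
      ≤ 1 / 2 * exp b * ((a - b) ^ 2 / 4 * min 1 (exp (a - b))) := by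
        have := mul_le_mul_of_nonneg_left (exp_neg_le_min_one_exp h)
          (by positivity : 0 ≤ 1 / 2 * exp b * ((a - b) ^ 2 / 4))
        linarith
    _ ≤ 1 / 2 * exp b * (exp ((a - b) / 2) - 1) ^ 2 :=
        mul_le_mul_of_nonneg_left (sq_div_four_mul_min_one_exp_le _) (by positivity)
    _ = 1 / 2 * (exp b * (exp ((a - b) / 2) - 1) ^ 2) := by ring

end Real

theorem MeasureTheory.ofReal_mul_lintegral_le_of_forall {Ω : Type*} [MeasurableSpace Ω]
    {μ : Measure Ω} {r s : ℝ} (hr : 0 ≤ r) (hs : 0 ≤ s) {g h : Ω → ℝ}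
    (hgh : ∀ ω, r * g ω ≤ s * h ω) :
    ENNReal.ofReal r * ∫⁻ ω, ENNReal.ofReal (g ω) ∂μ ≤
      ENNReal.ofReal s * ∫⁻ ω, ENNReal.ofReal (h ω) ∂μ := by
  rw [← lintegral_const_mul' _ _ ENNReal.ofReal_ne_top,
    ← lintegral_const_mul' _ _ ENNReal.ofReal_ne_top]
  refine lintegral_mono fun ω => ?_
  rw [← ENNReal.ofReal_mul hr, ← ENNReal.ofReal_mul hs]
  exact ENNReal.ofReal_le_ofReal (hgh ω)

theorem stmt_14_general {Ω : Type*} [MeasurableSpace Ω] (μ : Measure Ω) (c : ℝ)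
    (f f' : Ω → ℝ)
    (hdiff : ∀ ω, |f ω - f' ω| ≤ c) :
    (ENNReal.ofReal (Real.exp (-c)) / 8) *
        ∫⁻ ω, ENNReal.ofReal ((f ω - f' ω) ^ 2 * Real.exp (f' ω)) ∂μ ≤
      (1 / 2 : ℝ≥0∞) *
        ∫⁻ ω, ENNReal.ofReal ((Real.exp (f ω / 2) - Real.exp (f' ω / 2)) ^ 2) ∂μ := by
  have h8 : ENNReal.ofReal (Real.exp (-c)) / 8 = ENNReal.ofReal (Real.exp (-c) / 8) := by
    rw [ENNReal.ofReal_div_of_pos (by norm_num)]; norm_num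
  have h2 : (1 / 2 : ℝ≥0∞) = ENNReal.ofReal (1 / 2) := by
    rw [ENNReal.ofReal_div_of_pos (by norm_num)]; norm_num
  rw [h8, h2]
  exact ofReal_mul_lintegral_le_of_forall (by positivity) (by norm_num)
    fun ω => Real.exp_neg_div_eight_mul_le_half_sq_exp_half_sub (hdiff ω)

/-- Bounded-difference version of Lemma A.1: if `|f - f'| ≤ c` pointwise, then
`(e^{-c}/8) ∫ (f - f')² e^{f'} dμ ≤ (1/2) ∫ (e^{f/2} - e^{f'/2})² dμ`. -/
theorem stmt_14 {Ω : Type*} [MeasurableSpace Ω] (μ : Measure Ω) (c : ℝ) (hc : 0 ≤ c)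
    (f f' : Ω → ℝ) (hf : Measurable f) (hf' : Measurable f')
    (hdiff : ∀ ω, |f ω - f' ω| ≤ c) :
    (ENNReal.ofReal (Real.exp (-c)) / 8) *
        ∫⁻ ω, ENNReal.ofReal ((f ω - f' ω) ^ 2 * Real.exp (f' ω)) ∂μ ≤
      (1 / 2 : ℝ≥0∞) *
        ∫⁻ ω, ENNReal.ofReal ((Real.exp (f ω / 2) - Real.exp (f' ω / 2)) ^ 2) ∂μ :=
  stmt_14_general μ c f f' hdiff
end
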